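/- (Control function of peer-group endogeneity, Lemma 3.1). Under the stated model, for every i ∈ {1,…,N} the conditional expectation of the outcome error given all observed characteristics, the network, and the individual's own unobserved heterogeneity depends only on the latter: 𝔼[υ_i | σ((x_j)_{j=1}^N, D_N, a_i)] = 𝔼[υ_i | σ(a_i)] almost surely. -/

import Mathlib

/-!
Put `Tᵢ = (xᵢ, aᵢ, υᵢ)` and let `𝒢ᵢ` be the σ-algebra generated by the `Tⱼ`, `j ≠ i`, and the
network noise `u`. Independence across units and of `u` makes `σ(Tᵢ)` independent of `𝒢ᵢ`. Since
`D` is a measurable function of `(x₂ⱼ, aⱼ)ⱼ` and `u`, the observed σ-algebra `σ((xⱼ)ⱼ, D, aᵢ)`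
lies between `σ(aᵢ)` and `σ(xᵢ, aᵢ) ⊔ 𝒢ᵢ`. Adjoining the independent `𝒢ᵢ` does not change
`𝔼[υᵢ | σ(xᵢ, aᵢ)]`, which equals `𝔼[υᵢ | σ(aᵢ)]` by the fixed-effect assumption, and a
conditional expectation that agrees on two nested σ-algebras agrees on every σ-algebra in between.
-/

open MeasureTheory ProbabilityTheory MeasurableSpace

namespace MeasurableSpace

variable {Ω : Type*}

theorem isPiSystem_image2_inter (m₁ m₂ : MeasurableSpace Ω) :
    IsPiSystem (Set.image2 (· ∩ ·) {s | MeasurableSet[m₁] s} {t | MeasurableSet[m₂] t}) := by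
  rintro _ ⟨A, hA, B, hB, rfl⟩ _ ⟨A', hA', B', hB', rfl⟩ -
  exact ⟨A ∩ A', MeasurableSet.inter hA hA', B ∩ B', MeasurableSet.inter hB hB',
    (Set.inter_inter_inter_comm A B A' B').symm⟩

theorem generateFrom_image2_inter (m₁ m₂ : MeasurableSpace Ω) :
    generateFrom (Set.image2 (· ∩ ·) {s | MeasurableSet[m₁] s} {t | MeasurableSet[m₂] t}) =
      m₁ ⊔ m₂ := by
  refine le_antisymm (generateFrom_le ?_) (sup_le (fun A hA ↦ ?_) (fun B hB ↦ ?_))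
  · rintro _ ⟨A, hA, B, hB, rfl⟩
    exact MeasurableSet.inter (le_sup_left (b := m₂) A hA) (le_sup_right (a := m₁) B hB)
  · exact measurableSet_generateFrom ⟨A, hA, Set.univ, MeasurableSet.univ, Set.inter_univ A⟩
  · exact measurableSet_generateFrom ⟨Set.univ, MeasurableSet.univ, B, hB, Set.univ_inter B⟩

end MeasurableSpace

namespace ProbabilityTheory

section

variable {Ω : Type*} {m₁ m₂ m₃ : MeasurableSpace Ω} [mΩ : MeasurableSpace Ω] {μ : Measure Ω}

theorem indep_sup_right_of_indep [IsZeroOrProbabilityMeasure μ] (hle₁ : m₁ ≤ mΩ)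
    (hle₂ : m₂ ≤ mΩ) (hle₃ : m₃ ≤ mΩ) (h₁₂ : Indep m₁ m₂ μ) (h₃ : Indep m₃ (m₁ ⊔ m₂) μ) :
    Indep m₁ (m₂ ⊔ m₃) μ := by
  refine IndepSets.indep hle₁ (sup_le hle₂ hle₃) (@isPiSystem_measurableSet Ω m₁)
    (isPiSystem_image2_inter m₂ m₃) (@generateFrom_measurableSet Ω m₁).symm
    (generateFrom_image2_inter m₂ m₃).symm ((IndepSets_iff _ _ _).2 ?_)
  rintro A _ hA ⟨B, hB, C, hC, rfl⟩
  dsimp only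
  have hAB : μ (A ∩ B) = μ A * μ B := (Indep_iff _ _ _).1 h₁₂ A B hA hB
  have hABC : μ (C ∩ (A ∩ B)) = μ C * μ (A ∩ B) :=
    (Indep_iff _ _ _).1 h₃ C _ hC (MeasurableSet.inter (le_sup_left (b := m₂) A hA)
      (le_sup_right (a := m₁) B hB))
  have hBC : μ (C ∩ B) = μ C * μ B :=
    (Indep_iff _ _ _).1 h₃ C B hC (le_sup_right (a := m₁) B hB)
  rw [← Set.inter_assoc, Set.inter_comm _ C, hABC, hAB, Set.inter_comm B, hBC]
  ring

end

variable {Ω ι γ : Type*} {β : ι → Type*} [∀ i, MeasurableSpace (β i)] [MeasurableSpace γ]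
  {T : ∀ i, Ω → β i} {U : Ω → γ}

abbrev sigmaOthersAndNoise (T : ∀ i, Ω → β i) (U : Ω → γ) (i : ι) : MeasurableSpace Ω :=
  (⨆ j ∈ ({i}ᶜ : Set ι), MeasurableSpace.comap (T j) inferInstance) ⊔
    MeasurableSpace.comap U inferInstance

theorem measurable_sup_sigmaOthersAndNoise {m₀ : MeasurableSpace Ω} {i j : ι} (hj : j ≠ i) :
    Measurable[m₀ ⊔ sigmaOthersAndNoise T U i] (T j) :=
  (comap_measurable (T j)).mono (le_sup_of_le_right <| le_sup_of_le_left <|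
    le_biSup (fun j ↦ MeasurableSpace.comap (T j) inferInstance) hj) le_rfl

theorem measurable_noise_sup_sigmaOthersAndNoise {m₀ : MeasurableSpace Ω} (i : ι) :
    Measurable[m₀ ⊔ sigmaOthersAndNoise T U i] U :=
  (comap_measurable U).mono (le_sup_of_le_right le_sup_right) le_rfl

variable [mΩ : MeasurableSpace Ω] {μ : Measure Ω}

theorem sigmaOthersAndNoise_le (hTm : ∀ i, Measurable (T i)) (hU : Measurable U) (i : ι) :
    sigmaOthersAndNoise T U i ≤ mΩ :=
  sup_le (iSup₂_le fun j _ ↦ (hTm j).comap_le) hU.comap_le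

theorem iIndepFun.indep_sigmaOthersAndNoise [IsProbabilityMeasure μ] (hT : iIndepFun T μ)
    (hTm : ∀ i, Measurable (T i)) (hU : Measurable U) (hUT : IndepFun U (fun ω i ↦ T i ω) μ)
    (i : ι) : Indep (MeasurableSpace.comap (T i) inferInstance) (sigmaOthersAndNoise T U i) μ := by
  have hTle : ∀ j, MeasurableSpace.comap (T j) inferInstance ≤
      MeasurableSpace.comap (fun ω i ↦ T i ω) inferInstance :=
    fun j ↦ ((measurable_pi_apply j).comp (comap_measurable fun ω i ↦ T i ω)).comap_le
  have hi : Indep (MeasurableSpace.comap (T i) inferInstance)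
      (⨆ j ∈ ({i}ᶜ : Set ι), MeasurableSpace.comap (T j) inferInstance) μ := by
    simpa only [Set.mem_singleton_iff, iSup_iSup_eq_left] using
      indep_iSup_of_disjoint (fun j ↦ (hTm j).comap_le) hT.iIndep (S := {i}) disjoint_compl_right
  refine indep_sup_right_of_indep (hTm i).comap_le
    (iSup₂_le fun j _ ↦ (hTm j).comap_le) hU.comap_le hi ?_
  exact indep_of_indep_of_le_right ((IndepFun_iff_Indep _ _ _).1 hUT)
    (sup_le (hTle i) (iSup₂_le fun j _ ↦ hTle j))

end ProbabilityTheory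

namespace MeasureTheory

variable {Ω E : Type*} [NormedAddCommGroup E] [NormedSpace ℝ E] [CompleteSpace E]
  {m₁ m₂ m₃ : MeasurableSpace Ω} [mΩ : MeasurableSpace Ω] {μ : Measure Ω} [IsFiniteMeasure μ]
  {f : Ω → E}

theorem setIntegral_inter_of_indep (hle₂ : m₂ ≤ mΩ) (hle₃ : m₃ ≤ mΩ)
    (hf : StronglyMeasurable[m₃] f) (hfi : Integrable f μ) (hindep : Indep m₃ m₂ μ)
    {A B : Set Ω} (hA : MeasurableSet[m₃] A) (hB : MeasurableSet[m₂] B) :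
    ∫ ω in A ∩ B, f ω ∂μ = μ.real B • ∫ ω in A, f ω ∂μ := by
  have hA' : MeasurableSet A := hle₃ A hA
  calc ∫ ω in A ∩ B, f ω ∂μ = ∫ ω in B, A.indicator f ω ∂μ := by
        rw [setIntegral_indicator hA', Set.inter_comm]
    _ = ∫ ω in B, μ[A.indicator f | m₂] ω ∂μ :=
        (setIntegral_condExp hle₂ (hfi.indicator hA') hB).symm
    _ = ∫ _ in B, ∫ ω, A.indicator f ω ∂μ ∂μ :=
        setIntegral_congr_ae (hle₂ B hB) <|
          (condExp_indep_eq hle₃ hle₂ (hf.indicator hA) hindep).mono fun _ h _ ↦ h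
    _ = μ.real B • ∫ ω in A, f ω ∂μ := by
        rw [setIntegral_const, integral_indicator hA']

theorem condExp_sup_ae_eq_of_indep (hle₂ : m₂ ≤ mΩ) (hle₃ : m₃ ≤ mΩ) (h₁₃ : m₁ ≤ m₃)
    (hf : StronglyMeasurable[m₃] f) (hindep : Indep m₃ m₂ μ) :
    μ[f | m₁ ⊔ m₂] =ᵐ[μ] μ[f | m₁] := by
  by_cases hfi : Integrable f μ
  swap
  · simp_rw [condExp_of_not_integrable hfi]
    rfl
  have hle₁ : m₁ ≤ mΩ := h₁₃.trans hle₃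
  have hle : m₁ ⊔ m₂ ≤ mΩ := sup_le hle₁ hle₂
  refine (ae_eq_condExp_of_forall_setIntegral_eq hle hfi
    (fun _ _ _ ↦ integrable_condExp.integrableOn) (fun s hs hμs ↦ ?_)
    (stronglyMeasurable_condExp.mono (le_sup_left : m₁ ≤ m₁ ⊔ m₂)).aestronglyMeasurable).symm
  clear hμs
  induction s, hs using induction_on_inter (generateFrom_image2_inter m₁ m₂).symm
    (isPiSystem_image2_inter m₁ m₂) with
  | empty => simp
  | basic _ hs =>
    obtain ⟨A, hA, B, hB, rfl⟩ := hs
    rw [setIntegral_inter_of_indep hle₂ hle₃ (stronglyMeasurable_condExp.mono h₁₃)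
        integrable_condExp hindep (h₁₃ A hA) hB,
      setIntegral_inter_of_indep hle₂ hle₃ hf hfi hindep (h₁₃ A hA) hB,
      setIntegral_condExp hle₁ hfi hA]
  | compl t ht iht =>
    rw [setIntegral_compl (hle t ht) integrable_condExp, setIntegral_compl (hle t ht) hfi, iht,
      integral_condExp hle₁]
  | iUnion s hdisj hs ihs =>
    rw [integral_iUnion (fun n ↦ hle _ (hs n)) hdisj integrable_condExp.integrableOn,
      integral_iUnion (fun n ↦ hle _ (hs n)) hdisj hfi.integrableOn]
    exact tsum_congr ihs

theorem condExp_ae_eq_of_le_of_condExp_ae_eq {m G M : MeasurableSpace Ω} (hmG : m ≤ G)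
    (hGM : G ≤ M) (hM : M ≤ mΩ) (h : μ[f | M] =ᵐ[μ] μ[f | m]) :
    μ[f | G] =ᵐ[μ] μ[f | m] :=
  calc μ[f | G] =ᵐ[μ] μ[μ[f | M] | G] := (condExp_condExp_of_le hGM hM).symm
    _ =ᵐ[μ] μ[μ[f | m] | G] := condExp_congr_ae h
    _ = μ[f | m] := condExp_of_stronglyMeasurable (hGM.trans hM)
        (stronglyMeasurable_condExp.mono hmG) integrable_condExp

end MeasureTheory

theorem measurable_observables_of_network {Ω ι α₁ α₂ A Γ Δ : Type*} [MeasurableSpace α₁]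
    [MeasurableSpace α₂] [MeasurableSpace A] [MeasurableSpace Γ] [MeasurableSpace Δ]
    {M : MeasurableSpace Ω} {x : ι → Ω → α₁ × α₂} {a : ι → Ω → A} {u : Ω → Γ}
    {F : (ι → α₂) × (ι → A) × Γ → Δ} {D : Ω → Δ}
    (hxa : ∀ j, Measurable[M] fun ω ↦ (x j ω, a j ω)) (hu : Measurable[M] u)
    (hF : Measurable F) (hD : ∀ ω, D ω = F (fun j ↦ (x j ω).2, fun j ↦ a j ω, u ω)) (i : ι) :
    Measurable[M] fun ω ↦ (fun j ↦ x j ω, D ω, a i ω) := by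
  have hDM : Measurable[M] D := by
    rw [funext hD]
    exact hF.comp ((measurable_pi_lambda _ fun j ↦ (hxa j).fst.snd).prodMk
      ((measurable_pi_lambda _ fun j ↦ (hxa j).snd).prodMk hu))
  exact (measurable_pi_lambda _ fun j ↦ (hxa j).fst).prodMk (hDM.prodMk (hxa i).snd)

theorem control_function_of_peer_group_endogeneity_general
    {Ω : Type*} [MeasurableSpace Ω] (μ : Measure Ω) [IsProbabilityMeasure μ]
    (N d₁ d₂ : ℕ)
    (x : Fin N → Ω → (Fin d₁ → ℝ) × (Fin d₂ → ℝ))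
    (a : Fin N → Ω → ℝ)
    (υ : Fin N → Ω → ℝ)
    (u : Ω → Fin N → Fin N → ℝ)
    (hx : ∀ i, Measurable (x i)) (ha : ∀ i, Measurable (a i))
    (hυmeas : ∀ i, Measurable (υ i))
    (hu : Measurable u)
    -- (i) the triples (xᵢ, aᵢ, υᵢ), i = 1,…,N, are i.i.d.
    (hiid_indep : iIndepFun
      (fun i ω => (x i ω, a i ω, υ i ω)) μ)
    -- (ii) u is independent of the family ((xᵢ, aᵢ, υᵢ))ᵢ
    (hu_indep : IndepFun u (fun ω => fun i : Fin N => (x i ω, a i ω, υ i ω)) μ)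
    -- (iii) fixed effect: 𝔼[υᵢ | σ(xᵢ, aᵢ)] = 𝔼[υᵢ | σ(aᵢ)] a.s.
    (hfe : ∀ i, μ[υ i | MeasurableSpace.comap (fun ω => (x i ω, a i ω)) inferInstance]
      =ᵐ[μ] μ[υ i | MeasurableSpace.comap (a i) inferInstance])
    -- the network: D = F((x₂ⱼ)ⱼ, (aⱼ)ⱼ, u), F measurable
    (F : (Fin N → Fin d₂ → ℝ) × (Fin N → ℝ) × (Fin N → Fin N → ℝ) →
      (Fin N → Fin N → ℝ))
    (hF : Measurable F)
    (D : Ω → (Fin N → Fin N → ℝ))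
    (hD : ∀ ω, D ω = F (fun j => (x j ω).2, fun j => a j ω, u ω)) :
    ∀ i, μ[υ i | MeasurableSpace.comap
        (fun ω => (fun j => x j ω, D ω, a i ω)) inferInstance]
      =ᵐ[μ] μ[υ i | MeasurableSpace.comap (a i) inferInstance] := by
  intro i
  let T : Fin N → Ω → _ := fun j ω ↦ (x j ω, a j ω, υ j ω)
  have hT : ∀ j, Measurable (T j) := fun j ↦ (hx j).prodMk ((ha j).prodMk (hυmeas j))
  have hxa_le : MeasurableSpace.comap (fun ω ↦ (x i ω, a i ω)) inferInstance ≤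
      MeasurableSpace.comap (T i) inferInstance :=
    ((measurable_fst.prodMk measurable_snd.fst).comp (comap_measurable (T i))).comap_le
  have hxa : ∀ j, Measurable[MeasurableSpace.comap (fun ω ↦ (x i ω, a i ω)) inferInstance ⊔
      sigmaOthersAndNoise T u i] fun ω ↦ (x j ω, a j ω) := by
    intro j
    rcases eq_or_ne j i with rfl | hj
    · exact (comap_measurable _).mono le_sup_left le_rfl
    · have hTj := measurable_sup_sigmaOthersAndNoise (T := T) (U := u)
        (m₀ := MeasurableSpace.comap (fun ω ↦ (x i ω, a i ω)) inferInstance) hj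
      exact hTj.fst.prodMk hTj.snd.fst
  have hobs_le := (measurable_observables_of_network hxa
    (measurable_noise_sup_sigmaOthersAndNoise i) hF hD i).comap_le
  have ha_le : MeasurableSpace.comap (a i) inferInstance ≤
      MeasurableSpace.comap (fun ω ↦ (fun j ↦ x j ω, D ω, a i ω)) inferInstance :=
    (measurable_snd.snd.comp (comap_measurable fun ω ↦ (fun j ↦ x j ω, D ω, a i ω))).comap_le
  have hRest_le := sigmaOthersAndNoise_le hT hu i
  have hsup := condExp_sup_ae_eq_of_indep hRest_le (hT i).comap_le hxa_le
    (measurable_snd.snd.comp (comap_measurable (T i))).stronglyMeasurable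
    (hiid_indep.indep_sigmaOthersAndNoise hT hu hu_indep i)
  exact condExp_ae_eq_of_le_of_condExp_ae_eq ha_le hobs_le
    (sup_le ((hx i).prodMk (ha i)).comap_le hRest_le) (hsup.trans (hfe i))

/-- **Control function of peer-group endogeneity (Lemma 3.1).**
Under the model: (i) the triples `(xᵢ, aᵢ, υᵢ)` are i.i.d.; (ii) the network-formation
errors `u` are independent of the family `((xᵢ, aᵢ, υᵢ))ᵢ`; (iii) fixed effect:
`𝔼[υᵢ | σ(xᵢ, aᵢ)] = 𝔼[υᵢ | σ(aᵢ)]` a.s.; and the adjacency matrix is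
`D = F((x₂ⱼ)ⱼ, (aⱼ)ⱼ, u)` for a measurable `F`.  Then for every `i`,
`𝔼[υᵢ | σ((xⱼ)ⱼ, D, aᵢ)] = 𝔼[υᵢ | σ(aᵢ)]` almost surely. -/
theorem control_function_of_peer_group_endogeneity
    {Ω : Type*} [MeasurableSpace Ω] (μ : Measure Ω) [IsProbabilityMeasure μ]
    (N d₁ d₂ : ℕ) (hN : 2 ≤ N)
    (x : Fin N → Ω → (Fin d₁ → ℝ) × (Fin d₂ → ℝ))
    (a : Fin N → Ω → ℝ)
    (υ : Fin N → Ω → ℝ)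
    (u : Ω → Fin N → Fin N → ℝ)
    (hx : ∀ i, Measurable (x i)) (ha : ∀ i, Measurable (a i))
    (hυmeas : ∀ i, Measurable (υ i)) (hυint : ∀ i, Integrable (υ i) μ)
    (hu : Measurable u)
    -- (i) the triples (xᵢ, aᵢ, υᵢ), i = 1,…,N, are i.i.d.
    (hiid_indep : iIndepFun
      (fun i ω => (x i ω, a i ω, υ i ω)) μ)
    (hiid_ident : ∀ i j, IdentDistrib (fun ω => (x i ω, a i ω, υ i ω))
      (fun ω => (x j ω, a j ω, υ j ω)) μ μ)
    -- (ii) u is independent of the family ((xᵢ, aᵢ, υᵢ))ᵢ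
    (hu_indep : IndepFun u (fun ω => fun i : Fin N => (x i ω, a i ω, υ i ω)) μ)
    -- (iii) fixed effect: 𝔼[υᵢ | σ(xᵢ, aᵢ)] = 𝔼[υᵢ | σ(aᵢ)] a.s.
    (hfe : ∀ i, μ[υ i | MeasurableSpace.comap (fun ω => (x i ω, a i ω)) inferInstance]
      =ᵐ[μ] μ[υ i | MeasurableSpace.comap (a i) inferInstance])
    -- the network: D = F((x₂ⱼ)ⱼ, (aⱼ)ⱼ, u), F measurable
    (F : (Fin N → Fin d₂ → ℝ) × (Fin N → ℝ) × (Fin N → Fin N → ℝ) →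
      (Fin N → Fin N → ℝ))
    (hF : Measurable F)
    (D : Ω → (Fin N → Fin N → ℝ))
    (hD : ∀ ω, D ω = F (fun j => (x j ω).2, fun j => a j ω, u ω)) :
    ∀ i, μ[υ i | MeasurableSpace.comap
        (fun ω => (fun j => x j ω, D ω, a i ω)) inferInstance]
      =ᵐ[μ] μ[υ i | MeasurableSpace.comap (a i) inferInstance] :=
  control_function_of_peer_group_endogeneity_general μ N d₁ d₂ x a υ u hx ha hυmeas hu hiid_indep
    hu_indep hfe F hF D hD
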